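/- (Corollary 2, odd posterior moments for β = 0.) Let n ≥ 1 be an integer, let α > 0, γ, δ be real numbers with n > γ + δ − 2α + 1, let r ∈ (−1,1), and let k ≥ 1 be an odd integer. Then ∫_{−1}^{1} ρ^k · 2rρ W_{γ,δ}(n) (1−ρ²)^{(2α+n−γ−δ−3)/2} ₂F₁((n−γ)/2, (n−δ)/2; 3/2; r²ρ²) dρ = 2r W_{γ,δ}(n) · B( (k+2)/2, α + (n−γ−δ−1)/2 ) · ₃F₂( (k+2)/2, (n−γ)/2, (n−δ)/2; 3/2, (k+2α+n−γ−δ+1)/2; r² ). -/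

import Mathlib

open MeasureTheory Real Set

/-- Pochhammer symbol (rising factorial) `(x)_m`. -/
noncomputable def poch (x : ℝ) (m : ℕ) : ℝ := (ascPochhammer ℝ m).eval x

/-- Confluent hypergeometric function `₁F₁(a; c; z)`. -/
noncomputable def oneF1 (a c z : ℝ) : ℝ :=
  ∑' m : ℕ, poch a m / (poch c m * (m.factorial : ℝ)) * z ^ m

/-- Gauss hypergeometric function `₂F₁(a, b; c; z)`. -/
noncomputable def twoF1 (a b c z : ℝ) : ℝ :=
  ∑' m : ℕ, poch a m * poch b m / (poch c m * (m.factorial : ℝ)) * z ^ m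

/-- Generalized hypergeometric function `₃F₂(a₁, a₂, a₃; b₁, b₂; z)`. -/
noncomputable def threeF2 (a₁ a₂ a₃ b₁ b₂ z : ℝ) : ℝ :=
  ∑' m : ℕ, poch a₁ m * poch a₂ m * poch a₃ m /
      (poch b₁ m * poch b₂ m * (m.factorial : ℝ)) * z ^ m

/-- Beta function `B(u,v) = Γ(u)Γ(v)/Γ(u+v)`. -/
noncomputable def betaFn (u v : ℝ) : ℝ := Real.Gamma u * Real.Gamma v / Real.Gamma (u + v)

/-- `W_{γ,δ}(n)`, the ratio of Gamma functions from the paper. -/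
noncomputable def Wgd (γ δ : ℝ) (n : ℕ) : ℝ :=
  (Real.Gamma (((n : ℝ) - γ) / 2) * Real.Gamma (((n : ℝ) - δ) / 2)) /
    (Real.Gamma (((n : ℝ) - γ - 1) / 2) * Real.Gamma (((n : ℝ) - δ - 1) / 2))

open Topology

lemma poch_zero (x : ℝ) : poch x 0 = 1 := by simp [poch]

lemma poch_succ (x : ℝ) (m : ℕ) : poch x (m + 1) = poch x m * (x + m) := by
  simp [poch, ascPochhammer_succ_right]

lemma poch_pos {x : ℝ} (hx : 0 < x) (m : ℕ) : 0 < poch x m := by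
  induction m with
  | zero => simp [poch_zero]
  | succ m ih => rw [poch_succ]; positivity

lemma abs_poch_le (x : ℝ) (m : ℕ) : |poch x m| ≤ poch (|x| + 1) m := by
  induction m with
  | zero => simp [poch_zero]
  | succ m ih =>
    rw [poch_succ, poch_succ, abs_mul]
    apply mul_le_mul ih _ (abs_nonneg _) (poch_pos (by positivity) m).le
    calc |x + (m:ℝ)| ≤ |x| + (m:ℝ) := by
          refine (abs_add_le _ _).trans ?_; simp [abs_of_nonneg (by positivity : (0:ℝ) ≤ (m:ℝ))]
      _ ≤ |x| + 1 + (m:ℝ) := by linarith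

lemma poch_le_poch {x y : ℝ} (hx : 0 < x) (hxy : x ≤ y) (m : ℕ) : poch x m ≤ poch y m := by
  induction m with
  | zero => simp [poch_zero]
  | succ m ih =>
    rw [poch_succ, poch_succ]
    apply mul_le_mul ih (by linarith) (by positivity) (poch_pos (lt_of_lt_of_le hx hxy) m).le

lemma Gamma_add_nat {x : ℝ} (hx : 0 < x) (m : ℕ) :
    Real.Gamma (x + m) = Real.Gamma x * poch x m := by
  induction m with
  | zero => simp [poch_zero]
  | succ m ih =>
    have : x + ((m : ℝ) + 1) = (x + m) + 1 := by ring
    push_cast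
    rw [this, Real.Gamma_add_one (by positivity), ih, poch_succ]; ring

lemma betaFn_pos {u v : ℝ} (hu : 0 < u) (hv : 0 < v) : 0 < betaFn u v := by
  have h1 := Real.Gamma_pos_of_pos hu
  have h2 := Real.Gamma_pos_of_pos hv
  have h3 := Real.Gamma_pos_of_pos (by linarith : (0:ℝ) < u + v)
  exact div_pos (mul_pos h1 h2) h3

lemma betaFn_add_nat {u v : ℝ} (hu : 0 < u) (hv : 0 < v) (m : ℕ) :
    betaFn (u + m) v = betaFn u v * poch u m / poch (u + v) m := by
  have h3 := Real.Gamma_pos_of_pos (by linarith : (0:ℝ) < u + v)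
  have h4 := poch_pos (by linarith : (0:ℝ) < u + v) m
  rw [betaFn, betaFn, Gamma_add_nat hu,
    show u + (m:ℝ) + v = (u + v) + (m:ℝ) by ring, Gamma_add_nat (by linarith)]
  field_simp

lemma betaIntegral_real {u v : ℝ} (hu : 0 < u) (hv : 0 < v) :
    ∫ x in Ioo (0:ℝ) 1, x ^ (u - 1) * (1 - x) ^ (v - 1) = betaFn u v := by
  have hre : (0:ℝ) < (u:ℂ).re := by simpa using hu
  have hre' : (0:ℝ) < (v:ℂ).re := by simpa using hv
  have key : ((∫ x in Ioo (0:ℝ) 1, x ^ (u - 1) * (1 - x) ^ (v - 1) : ℝ) : ℂ) =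
      Complex.betaIntegral u v := by
    rw [← integral_Ioc_eq_integral_Ioo, ← intervalIntegral.integral_of_le zero_le_one,
      ← intervalIntegral.integral_ofReal, Complex.betaIntegral]
    apply intervalIntegral.integral_congr
    intro x hx
    rw [uIcc_of_le zero_le_one] at hx
    have h1 : (0:ℝ) ≤ x := hx.1
    have h2 : (0:ℝ) ≤ 1 - x := by linarith [hx.2]
    show ((x ^ (u-1) * (1-x) ^ (v-1) : ℝ) : ℂ) = _
    rw [Complex.ofReal_mul, Complex.ofReal_cpow h1, Complex.ofReal_cpow h2]
    push_cast
    ring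
  have gm := Complex.Gamma_mul_Gamma_eq_betaIntegral hre hre'
  rw [← key, ← Complex.ofReal_add, Complex.Gamma_ofReal, Complex.Gamma_ofReal,
    Complex.Gamma_ofReal, ← Complex.ofReal_mul, ← Complex.ofReal_mul] at gm
  have greal : Real.Gamma u * Real.Gamma v =
      Real.Gamma (u + v) * ∫ x in Ioo (0:ℝ) 1, x ^ (u - 1) * (1 - x) ^ (v - 1) := by
    exact_mod_cast gm
  have h3 := Real.Gamma_pos_of_pos (by linarith : (0:ℝ) < u + v)
  rw [betaFn, greal]
  field_simp

lemma betaIntegrable {u v : ℝ} (hu : 0 < u) (hv : 0 < v) :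
    IntegrableOn (fun x : ℝ => x ^ (u - 1) * (1 - x) ^ (v - 1)) (Ioo 0 1) := by
  have hre : (0:ℝ) < (u:ℂ).re := by simpa using hu
  have hre' : (0:ℝ) < (v:ℂ).re := by simpa using hv
  have h := (Complex.betaIntegral_convergent hre hre').norm
  have h2 : IntegrableOn (fun x : ℝ => ‖(x:ℂ) ^ ((u:ℂ) - 1) * (1 - (x:ℂ)) ^ ((v:ℂ) - 1)‖)
      (Ioo 0 1) := by
    have := (intervalIntegrable_iff_integrableOn_Ioc_of_le zero_le_one).mp h
    exact this.mono_set Ioo_subset_Ioc_self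
  refine h2.congr_fun ?_ measurableSet_Ioo
  intro x hx
  have hx1 : (0:ℝ) < x := hx.1
  have hx2 : (0:ℝ) < 1 - x := by linarith [hx.2]
  have e1 : (1 : ℂ) - (x:ℂ) = ((1 - x : ℝ) : ℂ) := by push_cast; ring
  simp only []
  rw [norm_mul, e1,
    Complex.norm_cpow_eq_rpow_re_of_pos hx1, Complex.norm_cpow_eq_rpow_re_of_pos hx2]
  simp

lemma sq_image : (fun ρ : ℝ => ρ ^ 2) '' Ioo 0 1 = Ioo 0 1 := by
  ext x
  simp only [mem_image, mem_Ioo]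
  constructor
  · rintro ⟨ρ, ⟨h1, h2⟩, rfl⟩
    exact ⟨by positivity, by nlinarith⟩
  · rintro ⟨h1, h2⟩
    exact ⟨Real.sqrt x, ⟨Real.sqrt_pos.mpr h1, by
      rw [show (1:ℝ) = Real.sqrt 1 by simp]; exact Real.sqrt_lt_sqrt h1.le h2⟩,
      Real.sq_sqrt h1.le⟩

lemma sq_injOn : InjOn (fun ρ : ℝ => ρ ^ 2) (Ioo 0 1) := by
  intro x hx y hy h
  simp only at h
  nlinarith [hx.1, hy.1]

lemma sq_deriv : ∀ ρ ∈ Ioo (0:ℝ) 1,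
    HasDerivWithinAt (fun ρ : ℝ => ρ ^ 2) (2 * ρ) (Ioo 0 1) ρ := by
  intro ρ _
  simpa using (hasDerivAt_pow 2 ρ).hasDerivWithinAt

lemma mom_ptwise {q : ℝ} (i : ℕ) (hi : 1 ≤ i) {ρ : ℝ} (hρ : ρ ∈ Ioo (0:ℝ) 1) :
    |2 * ρ| • (((ρ:ℝ) ^ 2) ^ ((i:ℝ) + 1/2 - 1) * (1 - ρ ^ 2) ^ (q - 1)) =
      2 * (ρ ^ (2 * i) * (1 - ρ ^ 2) ^ (q - 1)) := by
  have hρ0 : (0:ℝ) < ρ := hρ.1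
  have e1 : ((ρ:ℝ) ^ 2) ^ ((i:ℝ) + 1/2 - 1) = ρ ^ (2 * (i:ℝ) - 1) := by
    rw [← Real.rpow_natCast ρ 2, ← Real.rpow_mul hρ0.le]
    norm_num
    ring_nf
  have e2 : ρ * ρ ^ (2 * (i:ℝ) - 1) = ρ ^ (2 * i) := by
    rw [← Real.rpow_natCast ρ (2 * i)]
    push_cast
    rw [show (2 * (i:ℝ) : ℝ) = 1 + (2 * (i:ℝ) - 1) by ring, Real.rpow_add hρ0,
      Real.rpow_one]
    ring_nf
  rw [abs_of_pos (by linarith), smul_eq_mul, e1]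
  calc 2 * ρ * (ρ ^ (2 * (i:ℝ) - 1) * (1 - ρ ^ 2) ^ (q - 1))
      = 2 * ((ρ * ρ ^ (2 * (i:ℝ) - 1)) * (1 - ρ ^ 2) ^ (q - 1)) := by ring
    _ = 2 * (ρ ^ (2 * i) * (1 - ρ ^ 2) ^ (q - 1)) := by rw [e2]

lemma mom_half {q : ℝ} (hq : 0 < q) (i : ℕ) (hi : 1 ≤ i) :
    ∫ ρ in Ioo (0:ℝ) 1, ρ ^ (2 * i) * (1 - ρ ^ 2) ^ (q - 1) =
      (1 / 2) * betaFn ((i:ℝ) + 1/2) q := by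
  have key := integral_image_eq_integral_abs_deriv_smul measurableSet_Ioo sq_deriv sq_injOn
    (fun x : ℝ => x ^ ((i:ℝ) + 1/2 - 1) * (1 - x) ^ (q - 1))
  rw [sq_image, betaIntegral_real (by positivity) hq] at key
  have e : (∫ x in Ioo (0:ℝ) 1, |2 * x| • ((x ^ 2) ^ ((i:ℝ) + 1/2 - 1) * (1 - x ^ 2) ^ (q - 1)))
      = ∫ x in Ioo (0:ℝ) 1, 2 * (x ^ (2 * i) * (1 - x ^ 2) ^ (q - 1)) :=
    setIntegral_congr_fun measurableSet_Ioo (fun ρ hρ => mom_ptwise i hi hρ)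
  rw [e, MeasureTheory.integral_const_mul] at key
  linarith

lemma mom_half_int {q : ℝ} (hq : 0 < q) (i : ℕ) (hi : 1 ≤ i) :
    IntegrableOn (fun ρ : ℝ => ρ ^ (2 * i) * (1 - ρ ^ 2) ^ (q - 1)) (Ioo 0 1) := by
  have key := (integrableOn_image_iff_integrableOn_abs_deriv_smul measurableSet_Ioo sq_deriv
    sq_injOn (fun x : ℝ => x ^ ((i:ℝ) + 1/2 - 1) * (1 - x) ^ (q - 1))).mp
  rw [sq_image] at key
  have h := key (betaIntegrable (by positivity) hq)
  have h2 := h.congr_fun (fun ρ hρ => mom_ptwise (q := q) i hi hρ) measurableSet_Ioo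
  have h3 : IntegrableOn (fun x : ℝ => 1/2 * (2 * (x ^ (2 * i) * (1 - x ^ 2) ^ (q - 1))))
      (Ioo 0 1) := h2.const_mul _
  refine h3.congr_fun ?_ measurableSet_Ioo
  intro ρ _
  simp only
  ring

lemma neg_deriv : ∀ x ∈ Ioo (0:ℝ) 1,
    HasDerivWithinAt (fun x : ℝ => -x) (-1) (Ioo 0 1) x := by
  intro x _
  exact (hasDerivAt_neg x).hasDerivWithinAt

lemma mom_neg_half {q : ℝ} (hq : 0 < q) (i : ℕ) (hi : 1 ≤ i) :
    (∫ ρ in Ioo (-1:ℝ) 0, ρ ^ (2 * i) * (1 - ρ ^ 2) ^ (q - 1)) =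
      ∫ ρ in Ioo (0:ℝ) 1, ρ ^ (2 * i) * (1 - ρ ^ 2) ^ (q - 1) := by
  have himg : (fun x : ℝ => -x) '' Ioo 0 1 = Ioo (-1) 0 := by simp
  have key := integral_image_eq_integral_abs_deriv_smul measurableSet_Ioo neg_deriv
    (neg_injective.injOn) (fun ρ : ℝ => ρ ^ (2 * i) * (1 - ρ ^ 2) ^ (q - 1))
  rw [himg] at key
  rw [key]
  apply setIntegral_congr_fun measurableSet_Ioo
  intro x _
  simp only
  rw [Even.neg_pow ⟨i, by ring⟩, neg_pow, Even.neg_pow (by decide : Even 2)]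
  simp

lemma mom_neg_half_int {q : ℝ} (hq : 0 < q) (i : ℕ) (hi : 1 ≤ i) :
    IntegrableOn (fun ρ : ℝ => ρ ^ (2 * i) * (1 - ρ ^ 2) ^ (q - 1)) (Ioo (-1) 0) := by
  have himg : (fun x : ℝ => -x) '' Ioo 0 1 = Ioo (-1) 0 := by simp
  have key := (integrableOn_image_iff_integrableOn_abs_deriv_smul measurableSet_Ioo neg_deriv
    (neg_injective.injOn) (fun ρ : ℝ => ρ ^ (2 * i) * (1 - ρ ^ 2) ^ (q - 1)))
  rw [himg] at key
  rw [key]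
  refine (mom_half_int hq i hi).congr_fun ?_ measurableSet_Ioo
  intro x _
  simp only
  rw [Even.neg_pow ⟨i, by ring⟩, neg_pow, Even.neg_pow (by decide : Even 2)]
  simp

lemma mom_int {q : ℝ} (hq : 0 < q) (i : ℕ) (hi : 1 ≤ i) :
    IntegrableOn (fun ρ : ℝ => ρ ^ (2 * i) * (1 - ρ ^ 2) ^ (q - 1)) (Ioo (-1) 1) := by
  rw [← Ioo_union_Ico_eq_Ioo (by norm_num : (-1:ℝ) < 0) (by norm_num : (0:ℝ) ≤ 1)]
  exact (mom_neg_half_int hq i hi).union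
    ((integrableOn_Ico_iff_integrableOn_Ioo (ha := enorm_ne_top)).mpr (mom_half_int hq i hi))

lemma mom {q : ℝ} (hq : 0 < q) (i : ℕ) (hi : 1 ≤ i) :
    (∫ ρ in Ioo (-1:ℝ) 1, ρ ^ (2 * i) * (1 - ρ ^ 2) ^ (q - 1)) = betaFn ((i:ℝ) + 1/2) q := by
  rw [← Ioo_union_Ico_eq_Ioo (by norm_num : (-1:ℝ) < 0) (by norm_num : (0:ℝ) ≤ 1)]
  rw [setIntegral_union (by
      rw [Set.disjoint_left]
      intro a ha hb
      exact absurd hb.1 (not_le.mpr ha.2)) measurableSet_Ico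
    (mom_neg_half_int hq i hi) ((integrableOn_Ico_iff_integrableOn_Ioo (ha := enorm_ne_top)).mpr (mom_half_int hq i hi)),
    integral_Ico_eq_integral_Ioo, mom_neg_half hq i hi, mom_half hq i hi]
  ring

open Filter in

lemma ratio_tendsto_one (c d : ℝ) :
    Tendsto (fun m : ℕ => (c + m) / (d + m)) atTop (𝓝 1) := by
  have h1 : Tendsto (fun m : ℕ => (c / m + 1) / (d / m + 1)) atTop (𝓝 1) := by
    have hc := (tendsto_const_div_atTop_nhds_zero_nat c).add_const 1
    have hd := (tendsto_const_div_atTop_nhds_zero_nat d).add_const 1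
    rw [zero_add] at hc hd
    have h : Tendsto (fun m : ℕ => (c / m + 1) / (d / m + 1)) atTop (𝓝 (1 / 1)) :=
      hc.div hd one_ne_zero
    simpa using h
  refine h1.congr' ?_
  filter_upwards [eventually_ge_atTop (⌈|d|⌉₊ + 1)] with m hm
  have hm1 : (⌈|d|⌉₊ : ℝ) + 1 ≤ (m : ℝ) := by exact_mod_cast hm
  have hda : |d| ≤ (⌈|d|⌉₊ : ℝ) := Nat.le_ceil _
  have habs : -d ≤ |d| := neg_le_abs d
  have hc0 : (0:ℝ) ≤ (⌈|d|⌉₊ : ℝ) := Nat.cast_nonneg _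
  have hm0 : (0:ℝ) < (m : ℝ) := by linarith
  have hdm : (0:ℝ) < d + m := by linarith
  rw [div_add' _ _ _ hm0.ne', div_add' _ _ _ hm0.ne', div_div_div_cancel_right₀]
  · norm_num
  · exact hm0.ne'

open Filter in

lemma summable_hyp {A B r2 : ℝ} (hA : 1 ≤ A) (hB : 1 ≤ B) (hr2 : 0 ≤ r2) (hr2' : r2 < 1) :
    Summable (fun m : ℕ => poch A m * poch B m / (poch (3/2) m * (m.factorial : ℝ)) * r2 ^ m) := by
  set D : ℕ → ℝ := fun m => poch A m * poch B m / (poch (3/2) m * (m.factorial : ℝ)) * r2 ^ m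
    with hD
  rcases hr2.eq_or_lt with h0 | hpos
  · apply summable_of_ne_finset_zero (s := {0})
    intro m hm
    have : m ≠ 0 := by simpa using hm
    simp [hD, ← h0, zero_pow this]
  · have hDpos : ∀ m, 0 < D m := by
      intro m
      have h1 := poch_pos (by linarith : (0:ℝ) < A) m
      have h2 := poch_pos (by linarith : (0:ℝ) < B) m
      have h3 := poch_pos (by norm_num : (0:ℝ) < 3/2) m
      have h4 : (0:ℝ) < (m.factorial : ℝ) := by exact_mod_cast m.factorial_pos
      have h5 : (0:ℝ) < r2 ^ m := pow_pos hpos m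
      positivity
    have hratio : ∀ m : ℕ, D (m + 1) = D m * ((A + m) * (B + m) / ((3/2 + m) * (1 + m)) * r2) := by
      intro m
      have h3 := poch_pos (by norm_num : (0:ℝ) < 3/2) m
      have h4 : (0:ℝ) < (m.factorial : ℝ) := by exact_mod_cast m.factorial_pos
      have hm1 : (0:ℝ) < (3/2 : ℝ) + m := by positivity
      have hm2 : (0:ℝ) < (1:ℝ) + m := by positivity
      simp only [hD, poch_succ, Nat.factorial_succ, pow_succ]
      push_cast
      field_simp
      ring
    apply summable_of_ratio_test_tendsto_lt_one hr2'
      (Filter.Eventually.of_forall fun m => (hDpos m).ne')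
    have heq : ∀ m : ℕ, ‖D (m + 1)‖ / ‖D m‖ = (A + m) * (B + m) / ((3/2 + m) * (1 + m)) * r2 := by
      intro m
      have hm1 : (0:ℝ) < (3/2 : ℝ) + m := by positivity
      have hm2 : (0:ℝ) < (1:ℝ) + m := by positivity
      have hrpos : 0 < (A + m) * (B + m) / ((3/2 + m) * (1 + m)) * r2 := by
        have : (0:ℝ) < A + m := by positivity
        have : (0:ℝ) < B + m := by positivity
        positivity
      rw [hratio m, Real.norm_eq_abs, Real.norm_eq_abs, abs_mul, abs_of_pos hrpos]
      exact mul_div_cancel_left₀ _ (abs_ne_zero.mpr (hDpos m).ne')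
    rw [show 𝓝 r2 = 𝓝 ((1 * 1) * r2) by norm_num]
    apply Tendsto.congr (fun m => (heq m).symm)
    apply Tendsto.mul_const
    have t1 := ratio_tendsto_one A (3/2)
    have t2 := ratio_tendsto_one B 1
    have h12 := t1.mul t2
    rw [mul_one] at h12
    rw [show (1:ℝ) * 1 = 1 by norm_num]
    apply h12.congr
    intro m
    rw [div_mul_div_comm]

/-- Corollary 2 (`β = 0`), odd part. -/
theorem posterior_moment_odd_beta_zero (n : ℕ) (hn : 1 ≤ n) (α γ δ : ℝ) (hα : 0 < α)
    (hcond : γ + δ - 2 * α + 1 < (n : ℝ)) (r : ℝ) (hr : r ∈ Ioo (-1 : ℝ) 1)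
    (k : ℕ) (hk : Odd k) :
    (∫ ρ in Ioo (-1 : ℝ) 1,
        ρ ^ k * (2 * r * ρ * Wgd γ δ n *
          (1 - ρ ^ 2) ^ ((2 * α + (n : ℝ) - γ - δ - 3) / 2) *
          twoF1 (((n : ℝ) - γ) / 2) (((n : ℝ) - δ) / 2) (3 / 2) (r ^ 2 * ρ ^ 2))) =
      2 * r * Wgd γ δ n *
        betaFn (((k : ℝ) + 2) / 2) (α + ((n : ℝ) - γ - δ - 1) / 2) *
        threeF2 (((k : ℝ) + 2) / 2) (((n : ℝ) - γ) / 2) (((n : ℝ) - δ) / 2)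
          (3 / 2) (((k : ℝ) + 2 * α + (n : ℝ) - γ - δ + 1) / 2) (r ^ 2) := by
  obtain ⟨l, hk21⟩ := hk
  subst hk21
  -- abbreviations
  set W : ℝ := Wgd γ δ n with hW
  set a : ℝ := ((n : ℝ) - γ) / 2 with ha
  set b : ℝ := ((n : ℝ) - δ) / 2 with hb
  set q : ℝ := α + ((n : ℝ) - γ - δ - 1) / 2 with hq_def
  have hq : 0 < q := by rw [hq_def]; linarith
  set u : ℝ := (((2 * l + 1 : ℕ) : ℝ) + 2) / 2 with hu_def
  have hu : 0 < u := by rw [hu_def]; positivity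
  have hu_eq : ∀ m : ℕ, ((l + 1 + m : ℕ) : ℝ) + 1 / 2 = u + m := by
    intro m; rw [hu_def]; push_cast; ring
  have hexp : (2 * α + (n : ℝ) - γ - δ - 3) / 2 = q - 1 := by rw [hq_def]; ring
  have huq : (((2 * l + 1 : ℕ) : ℝ) + 2 * α + (n : ℝ) - γ - δ + 1) / 2 = u + q := by
    rw [hu_def, hq_def]; push_cast; ring
  have hr2 : r ^ 2 < 1 := by
    obtain ⟨h1, h2⟩ := hr; nlinarith
  -- the coefficients and the term functions
  set c : ℕ → ℝ := fun m => poch a m * poch b m / (poch (3 / 2) m * (m.factorial : ℝ)) with hc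
  set f : ℕ → ℝ → ℝ := fun m ρ =>
    2 * r * W * (c m * (r ^ 2) ^ m) * (ρ ^ (2 * (l + 1 + m)) * (1 - ρ ^ 2) ^ (q - 1)) with hf
  -- positivity facts
  have hpoch32 : ∀ m : ℕ, (0:ℝ) < poch (3 / 2) m := fun m => poch_pos (by norm_num) m
  have hfact : ∀ m : ℕ, (0:ℝ) < (m.factorial : ℝ) := fun m => by exact_mod_cast m.factorial_pos
  have hpochuq : ∀ m : ℕ, (0:ℝ) < poch (u + q) m := fun m => poch_pos (by linarith) m
  -- Step 1: rewrite integrand as a tsum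
  have step1 : (∫ ρ in Ioo (-1 : ℝ) 1,
        ρ ^ (2 * l + 1) * (2 * r * ρ * W *
          (1 - ρ ^ 2) ^ ((2 * α + (n : ℝ) - γ - δ - 3) / 2) *
          twoF1 a b (3 / 2) (r ^ 2 * ρ ^ 2))) =
      ∫ ρ in Ioo (-1 : ℝ) 1, ∑' m : ℕ, f m ρ := by
    apply setIntegral_congr_fun measurableSet_Ioo
    intro ρ hρ
    simp only
    rw [hexp, twoF1]
    calc ρ ^ (2 * l + 1) * (2 * r * ρ * W * (1 - ρ ^ 2) ^ (q - 1) *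
          ∑' m : ℕ, poch a m * poch b m / (poch (3 / 2) m * (m.factorial : ℝ))
            * (r ^ 2 * ρ ^ 2) ^ m)
        = (ρ ^ (2 * l + 1) * (2 * r * ρ * W * (1 - ρ ^ 2) ^ (q - 1))) *
          ∑' m : ℕ, c m * (r ^ 2 * ρ ^ 2) ^ m := by rw [hc]; ring
      _ = ∑' m : ℕ, (ρ ^ (2 * l + 1) * (2 * r * ρ * W * (1 - ρ ^ 2) ^ (q - 1))) *
          (c m * (r ^ 2 * ρ ^ 2) ^ m) := tsum_mul_left.symm
      _ = ∑' m : ℕ, f m ρ := by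
          apply tsum_congr
          intro m
          rw [hf]
          simp only
          rw [mul_pow]
          rw [← pow_mul, ← pow_mul]
          rw [show 2 * (l + 1 + m) = (2 * l + 1) + 1 + (2 * m) by ring, pow_add, pow_add,
            pow_one]
          ring
  -- integrability of each term
  have hint : ∀ m : ℕ, Integrable (f m) (volume.restrict (Ioo (-1 : ℝ) 1)) := by
    intro m
    exact (mom_int hq (l + 1 + m) (by omega)).const_mul _
  -- exact value of each integral
  have hval : ∀ m : ℕ, (∫ ρ in Ioo (-1 : ℝ) 1, f m ρ) =
      2 * r * W * (c m * (r ^ 2) ^ m) * betaFn (u + m) q := by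
    intro m
    rw [hf]
    simp only
    rw [MeasureTheory.integral_const_mul, mom hq (l + 1 + m) (by omega), hu_eq m]
  -- norm integral computation
  have hnorm : ∀ m : ℕ, (∫ ρ in Ioo (-1 : ℝ) 1, ‖f m ρ‖) =
      |2 * r * W * (c m * (r ^ 2) ^ m)| * betaFn (u + m) q := by
    intro m
    have e : ∀ ρ ∈ Ioo (-1 : ℝ) 1, ‖f m ρ‖ =
        |2 * r * W * (c m * (r ^ 2) ^ m)| * (ρ ^ (2 * (l + 1 + m)) * (1 - ρ ^ 2) ^ (q - 1)) := by
      intro ρ hρ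
      have h1 : (0:ℝ) ≤ 1 - ρ ^ 2 := by obtain ⟨g1, g2⟩ := hρ; nlinarith
      rw [hf]
      simp only [Real.norm_eq_abs, abs_mul]
      congr 1
      rw [abs_of_nonneg (by rw [pow_mul]; positivity : (0:ℝ) ≤ ρ ^ (2 * (l + 1 + m))),
        abs_of_nonneg (Real.rpow_nonneg h1 _)]
    rw [setIntegral_congr_fun measurableSet_Ioo e, MeasureTheory.integral_const_mul,
      mom hq (l + 1 + m) (by omega), hu_eq m]
  -- summability of norm integrals
  have hsum : Summable fun m : ℕ => ∫ ρ in Ioo (-1 : ℝ) 1, ‖f m ρ‖ := by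
    have hsummable := (summable_hyp (le_add_of_nonneg_left (abs_nonneg a))
      (le_add_of_nonneg_left (abs_nonneg b)) (sq_nonneg r) hr2).mul_left
      (|2 * r * W| * betaFn u q)
    apply Summable.of_nonneg_of_le
      (fun m => integral_nonneg fun ρ => norm_nonneg _) _ hsummable
    intro m
    rw [hnorm m]
    have hbetapos := betaFn_pos hu hq
    have hbeta_le : betaFn (u + m) q ≤ betaFn u q := by
      rw [betaFn_add_nat hu hq m]
      rw [div_le_iff₀ (hpochuq m)]
      calc betaFn u q * poch u m ≤ betaFn u q * poch (u + q) m := by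
            apply mul_le_mul_of_nonneg_left (poch_le_poch hu (by linarith) m) hbetapos.le
        _ = betaFn u q * poch (u + q) m := rfl
    have hDnn : (0:ℝ) ≤ poch (|a| + 1) m * poch (|b| + 1) m /
        (poch (3 / 2) m * (m.factorial : ℝ)) := by
      have := poch_pos (by positivity : (0:ℝ) < |a| + 1) m
      have := poch_pos (by positivity : (0:ℝ) < |b| + 1) m
      have := hpoch32 m
      have := hfact m
      positivity
    have hc_le : |c m| ≤ poch (|a| + 1) m * poch (|b| + 1) m /
        (poch (3 / 2) m * (m.factorial : ℝ)) := by
      rw [hc]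
      simp only
      rw [abs_div, abs_mul,
        abs_of_pos (mul_pos (hpoch32 m) (hfact m))]
      apply div_le_div_of_nonneg_right ?_ (mul_pos (hpoch32 m) (hfact m)).le
      exact mul_le_mul (abs_poch_le a m) (abs_poch_le b m) (abs_nonneg _)
        (poch_pos (by positivity) m).le
    have hbmnn : (0:ℝ) ≤ betaFn (u + m) q := (betaFn_pos (by positivity) hq).le
    calc |2 * r * W * (c m * (r ^ 2) ^ m)| * betaFn (u + ↑m) q
        = |2 * r * W| * (|c m| * (r ^ 2) ^ m) * betaFn (u + ↑m) q := by
          simp only [abs_mul]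
          rw [abs_of_nonneg (pow_nonneg (sq_nonneg r) m)]
      _ ≤ |2 * r * W| * (poch (|a| + 1) m * poch (|b| + 1) m /
            (poch (3 / 2) m * (m.factorial : ℝ)) * (r ^ 2) ^ m) * betaFn u q := by
          apply mul_le_mul ?_ hbeta_le hbmnn ?_
          · apply mul_le_mul_of_nonneg_left
              (mul_le_mul_of_nonneg_right hc_le (by positivity)) (abs_nonneg _)
          · positivity
      _ = |2 * r * W| * betaFn u q * (poch (|a| + 1) m * poch (|b| + 1) m /
            (poch (3 / 2) m * (m.factorial : ℝ)) * (r ^ 2) ^ m) := by ring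
  -- Step 2: interchange sum and integral, conclude
  rw [step1, ← MeasureTheory.integral_tsum_of_summable_integral_norm hint hsum]
  rw [huq]
  rw [threeF2]
  rw [← tsum_mul_left]
  apply tsum_congr
  intro m
  rw [hval m, betaFn_add_nat hu hq m, hc]
  simp only
  have h32 := (hpoch32 m).ne'
  have hfm := (hfact m).ne'
  have huqm := (hpochuq m).ne'
  field_simp
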